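/- Let M be a square free ℕ^n-graded module over S = k[x_1,...,x_n]. Then the minimal primes of M are exactly the ideals (x_i : i ∉ R) where R ranges over the maximal subsets of [n] with M_R ≠ 0. -/

import Mathlib

/-!
For `supp c ⊆ supp b`, iterating the square-free condition shows that `x^c` maps `M_b`
bijectively onto `M_{b+c}`; in particular `M_b ≠ 0` iff `M_{supp b} ≠ 0`. Comparing
homogeneous components of `f • m` then gives `ann M ⊆ P_R = (x_i : i ∉ R)` whenever `M_R ≠ 0`,
and `⋂ P_R ⊆ ann M` over the maximal such `R`. So every prime over `ann M` contains one of
these `P_R`, which are prime and pairwise incomparable (`P_R ⊆ P_R'` iff `R' ⊆ R`); hence they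
are exactly the minimal primes.
-/

open MvPolynomial

noncomputable section

def chi (n : ℕ) (R : Finset (Fin n)) : Fin n →₀ ℕ := ∑ x ∈ R, Finsupp.single x 1

@[elab_as_elim]
theorem Finsupp.induction_add_single_one {σ : Type*} {motive : (σ →₀ ℕ) → Prop} (c : σ →₀ ℕ)
    (zero : motive 0) (add_single : ∀ c i, motive c → motive (c + Finsupp.single i 1)) :
    motive c := by
  induction c using Finsupp.induction₂ with
  | zero => exact zero
  | add_single i e c _ he ih =>
    clear he
    induction e with
    | zero => simpa using ih
    | succ e ihe => rw [Finsupp.single_add, ← add_assoc]; exact add_single _ _ ihe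

theorem Finsupp.mem_and_subset_of_support_add_single_subset {σ : Type*} {c b : σ →₀ ℕ} {i : σ}
    (h : (c + Finsupp.single i 1).support ⊆ b.support) :
    i ∈ b.support ∧ c.support ⊆ (b + Finsupp.single i 1).support :=
  ⟨h (by simp), (Finsupp.support_mono le_self_add).trans <|
    h.trans (Finsupp.support_mono le_self_add)⟩

theorem chi_apply {n : ℕ} (R : Finset (Fin n)) (i : Fin n) :
    chi n R i = if i ∈ R then 1 else 0 := by
  simp [chi, Finsupp.finsetSum_apply, Finsupp.single_apply]

theorem support_chi {n : ℕ} (R : Finset (Fin n)) : (chi n R).support = R := by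
  ext i
  simp [chi_apply]

theorem chi_support_le {n : ℕ} (b : Fin n →₀ ℕ) : chi n b.support ≤ b := fun i => by
  rw [chi_apply]
  split_ifs with hi
  · exact Nat.one_le_iff_ne_zero.mpr (Finsupp.mem_support_iff.mp hi)
  · exact Nat.zero_le _

namespace MvPolynomial

variable {σ k : Type*}

theorem mem_ideal_span_X_image_iff_coeff [CommSemiring k] {s : Set σ} {f : MvPolynomial σ k} :
    f ∈ Ideal.span (X '' s) ↔ ∀ c : σ →₀ ℕ, (∀ i ∈ s, c i = 0) → coeff c f = 0 := by
  rw [mem_ideal_span_X_image]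
  refine forall_congr' fun c => ?_
  rw [mem_support_iff, not_imp_comm]
  push Not
  rfl

theorem span_X_image_le_span_X_image_iff [CommSemiring k] [Nontrivial k] {s t : Set σ} :
    Ideal.span (X '' s : Set (MvPolynomial σ k)) ≤ Ideal.span (X '' t) ↔ s ⊆ t := by
  refine ⟨fun h i hi => ?_, fun h => Ideal.span_mono (Set.image_mono h)⟩
  obtain ⟨j, hj, hij⟩ := mem_ideal_span_X_image.mp (h (Ideal.subset_span ⟨i, hi, rfl⟩))
    (Finsupp.single i 1) (by simp [support_X])
  rwa [Finsupp.single_apply_ne_zero.mp hij |>.1] at hj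

theorem isPrime_span_X_image [CommRing k] [IsDomain k] (s : Set σ) :
    (Ideal.span (X '' s : Set (MvPolynomial σ k))).IsPrime := by
  classical
  -- `φ` kills the variables in `s` and fixes the others, so it is the identity modulo the ideal
  let φ : MvPolynomial σ k →ₐ[k] MvPolynomial σ k := aeval fun i => if i ∈ s then 0 else X i
  suffices Ideal.span (X '' s) = RingHom.ker φ by rw [this]; exact RingHom.ker_isPrime _
  refine le_antisymm ?_ fun f hf => ?_
  · rw [Ideal.span_le]
    rintro _ ⟨i, hi, rfl⟩
    simp [φ, hi]
  · have hφ : (Ideal.Quotient.mkₐ k (Ideal.span (X '' s))).comp φ = Ideal.Quotient.mkₐ k _ := by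
      ext i
      by_cases hi : i ∈ s
      · have hX : (X i : MvPolynomial σ k) ∈ Ideal.span (X '' s) := Ideal.subset_span ⟨i, hi, rfl⟩
        simpa [φ, hi, eq_comm (a := (0 : _ ⧸ _)), Ideal.Quotient.eq_zero_iff_mem] using hX
      · simp [φ, hi]
    rw [← Ideal.Quotient.eq_zero_iff_mem, ← Ideal.Quotient.mkₐ_eq_mk k, ← hφ,
      AlgHom.comp_apply, RingHom.mem_ker.mp hf, map_zero]

theorem smul_eq_sum_coeff_smul_monomial_smul {M : Type*} [CommSemiring k] [AddCommMonoid M]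
    [Module (MvPolynomial σ k) M] [Module k M] [IsScalarTower k (MvPolynomial σ k) M]
    (f : MvPolynomial σ k) (m : M) :
    f • m = ∑ c ∈ f.support, coeff c f • monomial c (1 : k) • m := by
  conv_lhs => rw [f.as_sum, Finset.sum_smul]
  refine Finset.sum_congr rfl fun c _ => ?_
  rw [← smul_assoc, smul_monomial, smul_eq_mul, mul_one]

end MvPolynomial

theorem Submodule.mem_annihilator_top_of_iSup_eq_top {A k M ι : Type*} [CommSemiring A]
    [Semiring k] [AddCommMonoid M] [Module A M] [Module k M] {g : ι → Submodule k M}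
    (hg : ⨆ i, g i = ⊤) {f : A} (hf : ∀ i, ∀ m ∈ g i, f • m = 0) :
    f ∈ (⊤ : Submodule A M).annihilator := by
  refine Submodule.mem_annihilator.mpr fun m _ => ?_
  have hm : m ∈ ⨆ i, g i := hg ▸ Submodule.mem_top
  refine Submodule.iSup_induction g (motive := fun m => f • m = 0) hm hf (smul_zero f) ?_
  intro x y hx hy
  rw [smul_add, hx, hy, add_zero]

section Multigraded

variable {σ k M : Type*}

section Semiring

variable [CommSemiring k] [AddCommMonoid M] [Module (MvPolynomial σ k) M] [Module k M]

def IsMultigraded (g : (σ →₀ ℕ) → Submodule k M) : Prop :=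
  ∀ (b : σ →₀ ℕ) (i : σ), ∀ m ∈ g b,
    (X i : MvPolynomial σ k) • m ∈ g (b + Finsupp.single i 1)

def IsSquareFree (g : (σ →₀ ℕ) → Submodule k M) : Prop :=
  ∀ b : σ →₀ ℕ, ∀ i ∈ b.support,
    (∀ m ∈ g b, (X i : MvPolynomial σ k) • m = 0 → m = 0) ∧
    (∀ m' ∈ g (b + Finsupp.single i 1), ∃ m ∈ g b, (X i : MvPolynomial σ k) • m = m')

variable {g : (σ →₀ ℕ) → Submodule k M}

theorem IsMultigraded.monomial_smul_mem (hg : IsMultigraded g) (c : σ →₀ ℕ) {b : σ →₀ ℕ}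
    {m : M} (hm : m ∈ g b) : monomial c (1 : k) • m ∈ g (b + c) := by
  induction c using Finsupp.induction_add_single_one generalizing b m with
  | zero => simpa using hm
  | add_single c i ih =>
    rw [monomial_add_single, pow_one, mul_smul, ← add_assoc, add_right_comm]
    exact ih (hg b i m hm)

theorem IsSquareFree.eq_zero_of_monomial_smul_eq_zero (hsf : IsSquareFree g)
    (hg : IsMultigraded g) {b c : σ →₀ ℕ} (hc : c.support ⊆ b.support) {m : M}
    (hm : m ∈ g b) (h : monomial c (1 : k) • m = 0) : m = 0 := by
  induction c using Finsupp.induction_add_single_one generalizing b m with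
  | zero => simpa using h
  | add_single c i ih =>
    obtain ⟨hi, hcb⟩ := Finsupp.mem_and_subset_of_support_add_single_subset hc
    rw [monomial_add_single, pow_one, mul_smul] at h
    exact (hsf b i hi).1 m hm (ih hcb (hg b i m hm) h)

theorem IsSquareFree.exists_monomial_smul_eq (hsf : IsSquareFree g) {b c : σ →₀ ℕ}
    (hc : c.support ⊆ b.support) {m' : M} (hm' : m' ∈ g (b + c)) :
    ∃ m ∈ g b, monomial c (1 : k) • m = m' := by
  induction c using Finsupp.induction_add_single_one generalizing b m' with
  | zero => exact ⟨m', by simpa using hm', by simp⟩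
  | add_single c i ih =>
    obtain ⟨hi, hcb⟩ := Finsupp.mem_and_subset_of_support_add_single_subset hc
    rw [← add_assoc, add_right_comm] at hm'
    obtain ⟨m'', hm'', rfl⟩ := ih hcb hm'
    obtain ⟨m, hm, rfl⟩ := (hsf b i hi).2 m'' hm''
    exact ⟨m, hm, by rw [monomial_add_single, pow_one, mul_smul]⟩

end Semiring

theorem IsSquareFree.chi_support_ne_bot {n : ℕ} [CommSemiring k] [AddCommMonoid M]
    [Module (MvPolynomial (Fin n) k) M] [Module k M] {g : (Fin n →₀ ℕ) → Submodule k M}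
    (hsf : IsSquareFree g) {b : Fin n →₀ ℕ} (hb : g b ≠ ⊥) : g (chi n b.support) ≠ ⊥ := by
  refine fun h => hb (eq_bot_iff.mpr fun m' hm' => ?_)
  rw [← add_tsub_cancel_of_le (chi_support_le b)] at hm'
  obtain ⟨m, hm, rfl⟩ := hsf.exists_monomial_smul_eq
    ((support_chi b.support).symm ▸ Finsupp.support_tsub) hm'
  rw [h, Submodule.mem_bot] at hm
  rw [hm, smul_zero]
  exact Submodule.zero_mem _

theorem IsMultigraded.coeff_smul_monomial_smul_eq_zero [CommRing k] [AddCommGroup M]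
    [Module (MvPolynomial σ k) M] [Module k M] [IsScalarTower k (MvPolynomial σ k) M]
    {g : (σ →₀ ℕ) → Submodule k M} (hg : IsMultigraded g) (hind : iSupIndep g)
    {b : σ →₀ ℕ} {m : M} (hm : m ∈ g b) {f : MvPolynomial σ k} (hf : f • m = 0)
    (c : σ →₀ ℕ) : coeff c f • monomial c (1 : k) • m = 0 := by
  by_cases hc : c ∈ f.support
  · refine (iSupIndep_iff_finsetSum_eq_zero_imp_eq_zero _).mp
      (hind.comp (add_right_injective b)) f.support _
      (fun c _ => Submodule.smul_mem _ _ (hg.monomial_smul_mem c hm)) ?_ c hc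
    exact (smul_eq_sum_coeff_smul_monomial_smul f m).symm.trans hf
  · rw [notMem_support_iff.mp hc, zero_smul]

end Multigraded

section FacetIdeals

variable {n : ℕ} {k M : Type*} [Field k] [AddCommGroup M] [Module (MvPolynomial (Fin n) k) M]
  [Module k M] [IsScalarTower k (MvPolynomial (Fin n) k) M] {g : (Fin n →₀ ℕ) → Submodule k M}

theorem annihilator_le_span_X_image (hg : IsMultigraded g) (hsf : IsSquareFree g)
    (hind : iSupIndep g) {R : Finset (Fin n)} (hR : g (chi n R) ≠ ⊥) :
    (⊤ : Submodule (MvPolynomial (Fin n) k) M).annihilator ≤ Ideal.span (X '' {i | i ∉ R}) := by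
  intro f hf
  obtain ⟨m, hm, hm0⟩ := (Submodule.ne_bot_iff _).mp hR
  have hfm : f • m = 0 := Submodule.mem_annihilator.mp hf m Submodule.mem_top
  refine mem_ideal_span_X_image_iff_coeff.mpr fun c hc => by_contra fun hc0 => hm0 ?_
  have hcR : c.support ⊆ (chi n R).support := fun i hi => by
    rw [support_chi]
    by_contra h
    exact Finsupp.mem_support_iff.mp hi (hc i h)
  exact hsf.eq_zero_of_monomial_smul_eq_zero hg hcR hm
    ((smul_eq_zero_iff_right hc0).mp (hg.coeff_smul_monomial_smul_eq_zero hind hm hfm c))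

theorem mem_annihilator_of_forall_maximal (hg : IsMultigraded g) (hsf : IsSquareFree g)
    (hsup : ⨆ b, g b = ⊤) {f : MvPolynomial (Fin n) k}
    (hf : ∀ R, Maximal (fun R => g (chi n R) ≠ ⊥) R → f ∈ Ideal.span (X '' {i | i ∉ R})) :
    f ∈ (⊤ : Submodule (MvPolynomial (Fin n) k) M).annihilator := by
  refine Submodule.mem_annihilator_top_of_iSup_eq_top hsup fun b m hm => ?_
  rw [smul_eq_sum_coeff_smul_monomial_smul]
  refine Finset.sum_eq_zero fun c _ => ?_
  by_cases hz : monomial c (1 : k) • m = 0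
  · rw [hz, smul_zero]
  have hbc : g (b + c) ≠ ⊥ := fun h => hz (by simpa [h] using hg.monomial_smul_mem c hm)
  obtain ⟨R, hsub, hR⟩ := Finite.exists_le_maximal (p := fun R => g (chi n R) ≠ ⊥)
    (hsf.chi_support_ne_bot hbc)
  refine (mem_ideal_span_X_image_iff_coeff.mp (hf R hR) c fun i hi => ?_) ▸ zero_smul k _
  by_contra h
  exact hi (hsub (Finsupp.support_mono le_add_self (Finsupp.mem_support_iff.mpr h)))

theorem exists_maximal_span_X_image_le (hg : IsMultigraded g) (hsf : IsSquareFree g)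
    (hsup : ⨆ b, g b = ⊤) {Q : Ideal (MvPolynomial (Fin n) k)} (hQ : Q.IsPrime)
    (hAQ : (⊤ : Submodule (MvPolynomial (Fin n) k) M).annihilator ≤ Q) :
    ∃ R, Maximal (fun R => g (chi n R) ≠ ⊥) R ∧ Ideal.span (X '' {i | i ∉ R}) ≤ Q := by
  classical
  let facets := Finset.univ.filter (Maximal fun R => g (chi n R) ≠ ⊥)
  have hinf : facets.inf (fun R => Ideal.span (X '' {i | i ∉ R})) ≤ Q := fun f hf =>
    hAQ (mem_annihilator_of_forall_maximal hg hsf hsup fun R hR =>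
      Submodule.mem_finsetInf.mp hf R (by simp [facets, hR]))
  obtain ⟨R, hR, hle⟩ := hQ.inf_le'.mp hinf
  exact ⟨R, (Finset.mem_filter.mp hR).2, hle⟩

end FacetIdeals

/-- Let `M` be a square free `ℕ^n`-graded module over `S = k[x_1,…,x_n]` (the grading given
by `k`-submodules `g b` forming an internal direct sum, compatible with multiplication by
the variables, and with `x_i : M_b → M_{b+u_i}` bijective whenever `i` is in the support of
`b`).  Then the minimal primes of `M` (the minimal primes over its annihilator) are exactly
the ideals `(x_i : i ∉ R)` where `R` ranges over the maximal subsets of `[n]` with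
`M_R ≠ 0`. -/
theorem stmt_12 (n : ℕ) (k : Type) [Field k]
    (M : Type) [AddCommGroup M] [Module (MvPolynomial (Fin n) k) M]
    [Module k M] [IsScalarTower k (MvPolynomial (Fin n) k) M]
    (g : (Fin n →₀ ℕ) → Submodule k M)
    (hdecomp : DirectSum.IsInternal g)
    (hmul : ∀ (b : Fin n →₀ ℕ) (i : Fin n), ∀ m ∈ g b,
      (X i : MvPolynomial (Fin n) k) • m ∈ g (b + Finsupp.single i 1))
    (hsf : ∀ b : Fin n →₀ ℕ, ∀ i ∈ b.support,
      (∀ m ∈ g b, (X i : MvPolynomial (Fin n) k) • m = 0 → m = 0) ∧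
      (∀ m' ∈ g (b + Finsupp.single i 1), ∃ m ∈ g b,
        (X i : MvPolynomial (Fin n) k) • m = m')) :
    ((⊤ : Submodule (MvPolynomial (Fin n) k) M).annihilator).minimalPrimes =
      {P : Ideal (MvPolynomial (Fin n) k) | ∃ R : Finset (Fin n),
        (g (chi n R) ≠ ⊥ ∧ ∀ R' : Finset (Fin n), g (chi n R') ≠ ⊥ → R ⊆ R' → R' = R) ∧
        P = Ideal.span ((fun i => (X i : MvPolynomial (Fin n) k)) '' {i | i ∉ R})} := by
  have hsup := hdecomp.submodule_iSup_eq_top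
  have hann_le R (hR : g (chi n R) ≠ ⊥) :=
    annihilator_le_span_X_image hmul hsf hdecomp.submodule_iSupIndep hR
  have hmax (R : Finset (Fin n)) :
      (g (chi n R) ≠ ⊥ ∧ ∀ R', g (chi n R') ≠ ⊥ → R ⊆ R' → R' = R) ↔
        Maximal (fun R => g (chi n R) ≠ ⊥) R :=
    ⟨fun h => ⟨h.1, fun R' hR' hsub => (h.2 R' hR' hsub).le⟩,
      fun h => ⟨h.prop, fun _ hR' hsub => h.eq_of_ge hR' hsub⟩⟩
  ext Q
  simp only [hmax]
  constructor
  · rintro ⟨⟨hQ, hAQ⟩, hmin⟩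
    obtain ⟨R, hR, hle⟩ := exists_maximal_span_X_image_le hmul hsf hsup hQ hAQ
    exact ⟨R, hR, le_antisymm (hmin ⟨isPrime_span_X_image _, hann_le R hR.prop⟩ hle) hle⟩
  · rintro ⟨R, hR, rfl⟩
    refine ⟨⟨isPrime_span_X_image _, hann_le R hR.prop⟩, fun J ⟨hJ, hAJ⟩ hJR => ?_⟩
    obtain ⟨R', hR', hle⟩ := exists_maximal_span_X_image_le hmul hsf hsup hJ hAJ
    have hRR' : R ⊆ R' := fun i hi => by_contra fun h =>
      span_X_image_le_span_X_image_iff.mp (hle.trans hJR) h hi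
    rwa [hR.eq_of_ge hR'.prop hRR'] at hle
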